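/- arXiv:2102.03712 — 4 statements merged into one kernel-verified Lean document; each statement's English description precedes it below -/
import Mathlib

section
/- Let A, B, C be nonempty compact convex sets in ℝ^n. If A ⊖ C and C ⊖ B exist, then A ⊖ B exists and A ⊖ B = (A ⊖ C) + (C ⊖ B). -/
open scoped Pointwise Classical

def HukExists {n : ℕ} (A B : Set (EuclideanSpace ℝ (Fin n))) : Prop :=
  ∃ C : Set (EuclideanSpace ℝ (Fin n)), C.Nonempty ∧ IsCompact C ∧ Convex ℝ C ∧ A = B + C

noncomputable def huk {n : ℕ} (A B : Set (EuclideanSpace ℝ (Fin n))) :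
    Set (EuclideanSpace ℝ (Fin n)) :=
  if h : HukExists A B then h.choose else ∅

/-!
The heart is Rådström cancellation: `B + D ⊆ B + D'` forces `D ⊆ D'` when `B` is nonempty and
bounded and `D'` is closed and convex. For `d ∈ D`, iterating `b + d ∈ B + D'` and using
`k • D' + D' = (k + 1) • D'` (convexity) gives `b + k • d = b' + k • e` with `b' ∈ B`, `e ∈ D'`,
so `‖d - e‖ ≤ diam B / k`. Hence Hukuhara differences are unique, and
`A = C + (A ⊖ C) = B + ((A ⊖ C) + (C ⊖ B))` identifies `A ⊖ B`.
-/

section Cancellation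

variable {V : Type*} [NormedAddCommGroup V] [NormedSpace ℝ V]

theorem Convex.add_smul_mem_add_smul {B D' : Set V} {d : V} (hD' : Convex ℝ D')
    (h : ∀ b ∈ B, b + d ∈ B + D') (k : ℕ) :
    ∀ b ∈ B, b + ((k : ℝ) + 1) • d ∈ B + ((k : ℝ) + 1) • D' := by
  induction k with
  | zero => simpa using h
  | succ k ih =>
    intro b hb
    obtain ⟨b', hb', e, he, hbe⟩ := h b hb
    have hsplit : b + ((k + 1 : ℕ) + 1 : ℝ) • d = (b' + ((k : ℝ) + 1) • d) + e := by
      have hbe : b' + e = b + d := hbe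
      rw [add_right_comm, hbe, Nat.cast_succ, add_smul _ 1, one_smul]
      abel
    rw [hsplit, Nat.cast_succ, Convex.add_smul hD' (by positivity) zero_le_one, one_smul,
      ← add_assoc]
    exact Set.add_mem_add (ih b' hb') he

theorem Convex.subset_of_add_subset_add {B D D' : Set V} (hD'v : Convex ℝ D')
    (hD'c : IsClosed D') (hB : B.Nonempty) (hBb : Bornology.IsBounded B)
    (h : B + D ⊆ B + D') : D ⊆ D' := by
  intro d hd
  obtain ⟨b, hb⟩ := hB
  rw [← hD'c.closure_eq, Metric.mem_closure_iff]
  intro ε hε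
  obtain ⟨k, hk⟩ := exists_nat_gt (Metric.diam B / ε)
  have hk1 : (0 : ℝ) < k + 1 := by positivity
  obtain ⟨b', hb', _, ⟨e, he, rfl⟩, hbe⟩ :=
    hD'v.add_smul_mem_add_smul (fun x hx ↦ h (Set.add_mem_add hx hd)) k b hb
  have hde : d - e = ((k : ℝ) + 1)⁻¹ • (b' - b) := by
    rw [eq_inv_smul_iff₀ hk1.ne', smul_sub, sub_eq_sub_iff_add_eq_add, add_comm]
    exact hbe.symm
  refine ⟨e, he, ?_⟩
  calc dist d e = ((k : ℝ) + 1)⁻¹ * dist b' b := by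
        rw [dist_eq_norm, hde, norm_smul, norm_inv, ← dist_eq_norm, Real.norm_of_nonneg hk1.le]
    _ ≤ ((k : ℝ) + 1)⁻¹ * Metric.diam B := by gcongr; exact Metric.dist_le_diam_of_mem hBb hb' hb
    _ < ε := by
        rw [inv_mul_lt_iff₀ hk1]
        rw [div_lt_iff₀ hε] at hk
        nlinarith

theorem Convex.eq_of_add_eq_add {B D D' : Set V} (hDv : Convex ℝ D) (hDc : IsClosed D)
    (hD'v : Convex ℝ D') (hD'c : IsClosed D') (hB : B.Nonempty) (hBb : Bornology.IsBounded B)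
    (h : B + D = B + D') : D = D' :=
  (hD'v.subset_of_add_subset_add hD'c hB hBb h.le).antisymm
    (hDv.subset_of_add_subset_add hDc hB hBb h.ge)

end Cancellation

section Hukuhara

variable {n : ℕ} {A B C D : Set (EuclideanSpace ℝ (Fin n))}

theorem HukExists.huk_spec (h : HukExists A B) :
    (huk A B).Nonempty ∧ IsCompact (huk A B) ∧ Convex ℝ (huk A B) ∧ A = B + huk A B := by
  rw [huk, dif_pos h]
  exact h.choose_spec

theorem HukExists.eq_add_huk_add_huk (h₁ : HukExists A C) (h₂ : HukExists C B) :
    A = B + (huk A C + huk C B) :=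
  calc A = C + huk A C := h₁.huk_spec.2.2.2
    _ = B + huk C B + huk A C := congrArg (· + huk A C) h₂.huk_spec.2.2.2
    _ = B + (huk A C + huk C B) := by rw [add_assoc, add_comm (huk C B)]

theorem huk_eq_of_eq_add (hB : B.Nonempty) (hBb : Bornology.IsBounded B) (hD : D.Nonempty)
    (hDc : IsCompact D) (hDv : Convex ℝ D) (hA : A = B + D) : huk A B = D := by
  obtain ⟨-, hc, hv, hAB⟩ := HukExists.huk_spec ⟨D, hD, hDc, hDv, hA⟩
  exact hv.eq_of_add_eq_add hc.isClosed hDv hDc.isClosed hB hBb (hAB.symm.trans hA)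

end Hukuhara

theorem hukuhara_trans_general {n : ℕ} (A B C : Set (EuclideanSpace ℝ (Fin n)))
    (hB : B.Nonempty) (hBc : IsCompact B)
    (h1 : HukExists A C) (h2 : HukExists C B) :
    HukExists A B ∧ huk A B = huk A C + huk C B := by
  obtain ⟨hD₁, hD₁c, hD₁v, -⟩ := h1.huk_spec
  obtain ⟨hD₂, hD₂c, hD₂v, -⟩ := h2.huk_spec
  have hA := h1.eq_add_huk_add_huk h2
  exact ⟨⟨_, hD₁.add hD₂, hD₁c.add hD₂c, hD₁v.add hD₂v, hA⟩,
    huk_eq_of_eq_add hB hBc.isBounded (hD₁.add hD₂) (hD₁c.add hD₂c) (hD₁v.add hD₂v) hA⟩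

theorem hukuhara_trans {n : ℕ} (A B C : Set (EuclideanSpace ℝ (Fin n)))
    (hA : A.Nonempty) (hAc : IsCompact A) (hAv : Convex ℝ A)
    (hB : B.Nonempty) (hBc : IsCompact B) (hBv : Convex ℝ B)
    (hC : C.Nonempty) (hCc : IsCompact C) (hCv : Convex ℝ C)
    (h1 : HukExists A C) (h2 : HukExists C B) :
    HukExists A B ∧ huk A B = huk A C + huk C B :=
  hukuhara_trans_general A B C hB hBc h1 h2
end

section
/- Let A, B be nonempty compact convex subsets of ℝ^n such that the Hukuhara difference A ⊖ B exists. Then the Hausdorff distance between A and B equals ‖A ⊖ B‖, where ‖C‖ = sup_{c∈C} |c|. -/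
open scoped Pointwise Classical

noncomputable def setNorm {n : ℕ} (A : Set (EuclideanSpace ℝ (Fin n))) : ℝ :=
  sSup ((fun a => ‖a‖) '' A)

/-!
Every point `b + c` of `B + C` lies within `‖c‖` of `b ∈ B`, and every `b ∈ B` within `‖c‖` of
`b + c`, so `h(B + C, B) ≤ sup ‖C‖`. Conversely, for `c ∈ C` let `b₀` maximise `⟪c, ·⟫` on `B`:
for every `b ∈ B`, `‖c‖ ‖b₀ + c - b‖ ≥ ⟪c, b₀ + c - b⟫ ≥ ‖c‖²`, so `b₀ + c` is at distance at
least `‖c‖` from `B`.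
-/

open Metric Set

section SeminormedAddCommGroup

variable {E : Type*} [SeminormedAddCommGroup E]

theorem hausdorffDist_add_le_of_forall_norm_le {B C : Set E} {r : ℝ} (hC : C.Nonempty)
    (hr : ∀ c ∈ C, ‖c‖ ≤ r) : hausdorffDist (B + C) B ≤ r := by
  obtain ⟨c₀, hc₀⟩ := hC
  refine hausdorffDist_le_of_infDist ((norm_nonneg c₀).trans (hr c₀ hc₀)) ?_ ?_
  · rintro _ ⟨b, hb, c, hc, rfl⟩
    calc infDist (b + c) B ≤ dist (b + c) b := infDist_le_dist_of_mem hb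
      _ = ‖c‖ := by rw [dist_eq_norm, add_sub_cancel_left]
      _ ≤ r := hr c hc
  · intro b hb
    calc infDist b (B + C) ≤ dist b (b + c₀) := infDist_le_dist_of_mem (add_mem_add hb hc₀)
      _ = ‖c₀‖ := by rw [dist_eq_norm, sub_add_cancel_left, norm_neg]
      _ ≤ r := hr c₀ hc₀

end SeminormedAddCommGroup

section InnerProductSpace

variable {E : Type*} [NormedAddCommGroup E] [InnerProductSpace ℝ E]

theorem norm_le_dist_add_of_isMaxOn_inner {B : Set E} {c b₀ b : E}
    (hb₀ : IsMaxOn (fun x => inner ℝ c x) B b₀) (hb : b ∈ B) : ‖c‖ ≤ dist (b₀ + c) b := by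
  have hinner : ‖c‖ ^ 2 ≤ inner ℝ c (b₀ + c - b) := by
    rw [inner_sub_right, inner_add_right, real_inner_self_eq_norm_sq]
    linarith [show inner ℝ c b ≤ inner ℝ c b₀ from hb₀ hb]
  have hcs : inner ℝ c (b₀ + c - b) ≤ ‖c‖ * dist (b₀ + c) b := by
    rw [dist_eq_norm]
    exact real_inner_le_norm c _
  nlinarith [norm_nonneg c, dist_nonneg (x := b₀ + c) (y := b)]

theorem norm_le_hausdorffDist_add {B C : Set E} (hB : IsCompact B) (hBne : B.Nonempty)
    (hC : IsCompact C) {c : E} (hc : c ∈ C) : ‖c‖ ≤ hausdorffDist (B + C) B := by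
  obtain ⟨b₀, hb₀B, hb₀⟩ :=
    hB.exists_isMaxOn hBne (f := fun x => inner ℝ c x) (by fun_prop)
  have hfin : hausdorffEDist (B + C) B ≠ ⊤ :=
    hausdorffEDist_ne_top_of_nonempty_of_bounded ⟨_, add_mem_add hb₀B hc⟩ hBne
      (hB.add hC).isBounded hB.isBounded
  calc ‖c‖ ≤ infDist (b₀ + c) B :=
        (le_infDist hBne).2 fun _ hb => norm_le_dist_add_of_isMaxOn_inner hb₀ hb
    _ ≤ hausdorffDist (B + C) B := infDist_le_hausdorffDist_of_mem (add_mem_add hb₀B hc) hfin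

theorem hausdorffDist_add_eq_sSup_norm {B C : Set E} (hB : IsCompact B) (hBne : B.Nonempty)
    (hC : IsCompact C) (hCne : C.Nonempty) :
    hausdorffDist (B + C) B = sSup ((fun c => ‖c‖) '' C) := by
  apply le_antisymm
  · exact hausdorffDist_add_le_of_forall_norm_le hCne fun c hc =>
      le_csSup (hC.image continuous_norm).bddAbove (mem_image_of_mem _ hc)
  · exact csSup_le (hCne.image _) <| forall_mem_image.2 fun _ hc =>
      norm_le_hausdorffDist_add hB hBne hC hc

end InnerProductSpace

theorem hausdorffDist_eq_setNorm_hukuhara_general {n : ℕ} (A B : Set (EuclideanSpace ℝ (Fin n)))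
    (hB : B.Nonempty) (hBc : IsCompact B)
    (h : HukExists A B) :
    Metric.hausdorffDist A B = setNorm (huk A B) := by
  obtain ⟨hCne, hCc, -, hABC⟩ := h.choose_spec
  rw [setNorm, huk, dif_pos h, ← hausdorffDist_add_eq_sSup_norm hBc hB hCc hCne, ← hABC]

theorem hausdorffDist_eq_setNorm_hukuhara {n : ℕ} (A B : Set (EuclideanSpace ℝ (Fin n)))
    (hA : A.Nonempty) (hAc : IsCompact A) (hAv : Convex ℝ A)
    (hB : B.Nonempty) (hBc : IsCompact B) (hBv : Convex ℝ B)
    (h : HukExists A B) :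
    Metric.hausdorffDist A B = setNorm (huk A B) :=
  hausdorffDist_eq_setNorm_hukuhara_general A B hB hBc h
end

section
/- Let A, B be nonempty compact convex subsets of ℝ^n. Both Hukuhara differences A ⊖ B and B ⊖ A exist if and only if A is a translation of B, i.e., A = B + {c} for some c ∈ ℝ^n. -/
open scoped Pointwise Classical

lemma compact_translate_subset_zero {n : ℕ} {A : Set (EuclideanSpace ℝ (Fin n))}
    (hA : A.Nonempty) (hAc : IsCompact A) {e : EuclideanSpace ℝ (Fin n)}
    (h : ∀ a ∈ A, a + e ∈ A) : e = 0 := by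
  obtain ⟨R, hR⟩ := hAc.isBounded.exists_norm_le
  obtain ⟨a, ha⟩ := hA
  have key : ∀ k : ℕ, a + (k : ℝ) • e ∈ A := by
    intro k
    induction k with
    | zero => simpa using ha
    | succ m ih =>
      have heq : a + ((m + 1 : ℕ) : ℝ) • e = a + (m : ℝ) • e + e := by
        push_cast; module
      rw [heq]
      exact h _ ih
  by_contra he
  have hen : 0 < ‖e‖ := norm_pos_iff.mpr he
  obtain ⟨k, hk⟩ := exists_nat_gt ((R + ‖a‖) / ‖e‖)
  have h1 : ‖a + (k : ℝ) • e‖ ≤ R := hR _ (key k)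
  have h2 : ‖(k : ℝ) • e‖ ≤ R + ‖a‖ := by
    calc ‖(k : ℝ) • e‖ = ‖(a + (k : ℝ) • e) - a‖ := by rw [add_sub_cancel_left]
      _ ≤ ‖a + (k : ℝ) • e‖ + ‖a‖ := norm_sub_le _ _
      _ ≤ R + ‖a‖ := by linarith
  rw [norm_smul, Real.norm_natCast] at h2
  have : (R + ‖a‖) / ‖e‖ < k := hk
  have : R + ‖a‖ < (k : ℝ) * ‖e‖ := (div_lt_iff₀ hen).mp hk
  linarith

theorem hukuhara_both_iff_translate {n : ℕ} (A B : Set (EuclideanSpace ℝ (Fin n)))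
    (hA : A.Nonempty) (hAc : IsCompact A) (hAv : Convex ℝ A)
    (hB : B.Nonempty) (hBc : IsCompact B) (hBv : Convex ℝ B) :
    (HukExists A B ∧ HukExists B A) ↔
      ∃ c : EuclideanSpace ℝ (Fin n), A = B + ({c} : Set (EuclideanSpace ℝ (Fin n))) := by
  constructor
  · rintro ⟨⟨C, hCne, hCc, hCv, hAC⟩, ⟨D, hDne, hDc, hDv, hBD⟩⟩
    obtain ⟨d0, hd0⟩ := hDne
    -- key : every c ∈ C, d ∈ D satisfy d + c = 0
    have key : ∀ c ∈ C, ∀ d ∈ D, d + c = 0 := by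
      intro c hc d hd
      have step : ∀ a ∈ A, a + (d + c) ∈ A := by
        intro a ha
        have hab : a + d ∈ B := by
          rw [hBD]; exact Set.add_mem_add ha hd
        have : (a + d) + c ∈ A := by
          rw [hAC]; exact Set.add_mem_add hab hc
        simpa [add_assoc] using this
      exact compact_translate_subset_zero hA hAc step
    obtain ⟨c0, hc0⟩ := hCne
    refine ⟨c0, ?_⟩
    rw [hAC]
    congr 1
    apply Set.eq_singleton_iff_unique_mem.mpr
    refine ⟨hc0, fun c hc => ?_⟩
    have h1 : c = -d0 := eq_neg_of_add_eq_zero_right (key c hc d0 hd0)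
    have h2 : c0 = -d0 := eq_neg_of_add_eq_zero_right (key c0 hc0 d0 hd0)
    rw [h1, h2]
  · rintro ⟨c, hc⟩
    constructor
    · exact ⟨{c}, Set.singleton_nonempty c, isCompact_singleton, convex_singleton c, hc⟩
    · refine ⟨{-c}, Set.singleton_nonempty _, isCompact_singleton, convex_singleton _, ?_⟩
      rw [hc, Set.add_singleton, Set.add_singleton, Set.image_image]
      simp
end

section
/- Let A, B be nonempty compact convex subsets of ℝ^n. The Hukuhara difference A ⊖ B exists if and only if for every extreme point a of A there exists x ∈ ℝ^n such that a ∈ x + B and x + B ⊆ A. In this case A ⊖ B = {x ∈ ℝ^n : x + B ⊆ A}. -/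
open scoped Pointwise Classical

/-- Rådström cancellation for a point. -/
lemma radstrom_point {n : ℕ} {B C : Set (EuclideanSpace ℝ (Fin n))}
    (hB : B.Nonempty) (hBc : IsCompact B) (hCc : IsCompact C) (hCv : Convex ℝ C)
    {x : EuclideanSpace ℝ (Fin n)} (hx : ({x} : Set _) + B ⊆ B + C) : x ∈ C := by
  by_contra hxC
  obtain ⟨f, u, hfu, hux⟩ := geometric_hahn_banach_closed_point hCv hCc.isClosed hxC
  obtain ⟨b, hbB, hbmax⟩ := hBc.exists_isMaxOn hB f.continuous.continuousOn
  have hmem : x + b ∈ B + C := hx (Set.add_mem_add (Set.mem_singleton x) hbB)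
  obtain ⟨b', hb', c, hc, hbc⟩ := Set.mem_add.mp hmem
  have h1 : f b' ≤ f b := hbmax hb'
  have h2 : f c < u := hfu c hc
  have : f (b' + c) < f (x + b) := by
    simp only [map_add]
    linarith
  rw [hbc] at this
  linarith [le_refl (f (x + b))]

/-- the candidate difference set -/
lemma huk_eq_of_sum {n : ℕ} {A B C : Set (EuclideanSpace ℝ (Fin n))}
    (hB : B.Nonempty) (hBc : IsCompact B)
    (hCc : IsCompact C) (hCv : Convex ℝ C) (hsum : A = B + C) :
    C = {x : EuclideanSpace ℝ (Fin n) | ({x} : Set _) + B ⊆ A} := by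
  ext x
  constructor
  · intro hxC y hy
    obtain ⟨x', hx', b, hb, rfl⟩ := Set.mem_add.mp hy
    rw [Set.mem_singleton_iff] at hx'; subst hx'
    rw [hsum, add_comm x' b]
    exact Set.add_mem_add hb hxC
  · intro hx
    exact radstrom_point hB hBc hCc hCv (by rw [← hsum]; exact hx)

theorem hukuhara_exists_iff_extremePoints {n : ℕ} (A B : Set (EuclideanSpace ℝ (Fin n)))
    (hA : A.Nonempty) (hAc : IsCompact A) (hAv : Convex ℝ A)
    (hB : B.Nonempty) (hBc : IsCompact B) (hBv : Convex ℝ B) :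
    (HukExists A B ↔
      ∀ a ∈ Set.extremePoints ℝ A, ∃ x : EuclideanSpace ℝ (Fin n),
        a ∈ ({x} : Set (EuclideanSpace ℝ (Fin n))) + B ∧
        ({x} : Set (EuclideanSpace ℝ (Fin n))) + B ⊆ A) ∧
    (HukExists A B →
      huk A B = {x : EuclideanSpace ℝ (Fin n) |
        ({x} : Set (EuclideanSpace ℝ (Fin n))) + B ⊆ A}) := by
  constructor
  · constructor
    · rintro ⟨C, hCne, hCc, hCv, rfl⟩ a ha
      have haA : a ∈ B + C := ha.1
      obtain ⟨b, hb, c, hc, rfl⟩ := Set.mem_add.mp haA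
      refine ⟨c, ?_, ?_⟩
      · rw [add_comm b c]
        exact Set.add_mem_add (Set.mem_singleton c) hb
      · intro y hy
        obtain ⟨c', hc', b', hb', rfl⟩ := Set.mem_add.mp hy
        rw [Set.mem_singleton_iff] at hc'; subst hc'
        rw [add_comm c' b']
        exact Set.add_mem_add hb' hc
    · intro hext
      set C := {x : EuclideanSpace ℝ (Fin n) | ({x} : Set _) + B ⊆ A} with hCdef
      obtain ⟨b₀, hb₀⟩ := hB
      -- C nonempty
      obtain ⟨a₀, ha₀⟩ := hAc.extremePoints_nonempty hA
      obtain ⟨x₀, _, hx₀A⟩ := hext a₀ ha₀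
      have hCne : C.Nonempty := ⟨x₀, hx₀A⟩
      -- C closed
      have hCclosed : IsClosed C := by
        have : C = ⋂ b ∈ B, (fun x => x + b) ⁻¹' A := by
          ext x
          simp only [Set.mem_iInter, Set.mem_preimage, hCdef, Set.mem_setOf_eq]
          constructor
          · intro h b hb; exact h (Set.add_mem_add (Set.mem_singleton x) hb)
          · intro h y hy
            obtain ⟨x', hx', b, hb, rfl⟩ := Set.mem_add.mp hy
            rw [Set.mem_singleton_iff] at hx'; subst hx'
            exact h b hb
        rw [this]
        exact isClosed_biInter fun b _ => hAc.isClosed.preimage (continuous_id.add continuous_const)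
      -- C compact
      have hCsub : C ⊆ (fun a => a - b₀) '' A := by
        intro x hx
        exact ⟨x + b₀, hx (Set.add_mem_add (Set.mem_singleton x) hb₀), by simp⟩
      have hCc : IsCompact C :=
        (hAc.image (continuous_id.sub continuous_const)).of_isClosed_subset hCclosed hCsub
      -- C convex
      have hCv : Convex ℝ C := by
        intro x hx y hy s t hs ht hst
        intro z hz
        obtain ⟨w, hw, b, hb, rfl⟩ := Set.mem_add.mp hz
        rw [Set.mem_singleton_iff] at hw; subst hw
        have hxb : x + b ∈ A := hx (Set.add_mem_add (Set.mem_singleton x) hb)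
        have hyb : y + b ∈ A := hy (Set.add_mem_add (Set.mem_singleton y) hb)
        have := hAv hxb hyb hs ht hst
        have heq : s • (x + b) + t • (y + b) = (s • x + t • y) + b := by
          have hb1 : s • b + t • b = b := by rw [← add_smul, hst, one_smul]
          rw [smul_add, smul_add, add_add_add_comm, hb1]
        rwa [heq] at this
      -- A = B + C
      have hsum : A = B + C := by
        apply Set.Subset.antisymm
        · have hBCv : Convex ℝ (B + C) := hBv.add hCv
          have hBCcl : IsClosed (B + C) := (hBc.add hCc).isClosed
          have hextsub : Set.extremePoints ℝ A ⊆ B + C := by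
            intro a ha
            obtain ⟨x, hax, hxA⟩ := hext a ha
            obtain ⟨x', hx', b, hb, rfl⟩ := Set.mem_add.mp hax
            rw [Set.mem_singleton_iff] at hx'; subst hx'
            rw [add_comm x' b]
            exact Set.add_mem_add hb hxA
          calc A = closure (convexHull ℝ (Set.extremePoints ℝ A)) :=
                (closure_convexHull_extremePoints hAc hAv).symm
            _ ⊆ B + C := closure_minimal (convexHull_min hextsub hBCv) hBCcl
        · intro z hz
          obtain ⟨b, hb, c, hc, rfl⟩ := Set.mem_add.mp hz
          rw [add_comm b c]
          exact hc (Set.add_mem_add (Set.mem_singleton c) hb)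
      exact ⟨C, hCne, hCc, hCv, hsum⟩
  · intro h
    unfold huk
    rw [dif_pos h]
    obtain ⟨hne, hc, hv, hsum⟩ := h.choose_spec
    exact huk_eq_of_sum hB hBc hc hv hsum
end
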